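/- arXiv:2112.12738 — 6 statements merged into one kernel-verified Lean document; each statement's English description precedes it below -/
import Mathlib

section
/- For all operators A, B on ℂ^d ⊗ ℂ^d, (A^R B^R)^R = tr_{23}[(1 ⊗ (23)^{T_3} ⊗ 1)(A ⊗ B)], where the right-hand side is an operator on (ℂ^d)^{⊗4} partially traced over factors 2 and 3, and R denotes reshuffling. -/
open Matrix

/-- Reshuffling on `M_d ⊗ M_d`: `(|i⟩⟨j| ⊗ |k⟩⟨l|)^R = |i⟩⟨k| ⊗ |j⟩⟨l|`. -/
noncomputable def reshuffle {d : ℕ} (M : Matrix (Fin d × Fin d) (Fin d × Fin d) ℂ) :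
    Matrix (Fin d × Fin d) (Fin d × Fin d) ℂ :=
  Matrix.of fun p q => M (p.1, q.1) (p.2, q.2)

/-- The operator `1 ⊗ (23)^{T₃} ⊗ 1` on `(ℂ^d)^{⊗4}`, with the four factors
grouped as `(1,2)(3,4)`. -/
noncomputable def midPtSwap (d : ℕ) :
    Matrix ((Fin d × Fin d) × (Fin d × Fin d)) ((Fin d × Fin d) × (Fin d × Fin d)) ℂ :=
  Matrix.of fun p q =>
    if p.1.1 = q.1.1 ∧ p.1.2 = p.2.1 ∧ q.1.2 = q.2.1 ∧ p.2.2 = q.2.2 then 1 else 0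

/-- Tensor product of two operators on `ℂ^d ⊗ ℂ^d`. -/
noncomputable def kronBip {d : ℕ} (A B : Matrix (Fin d × Fin d) (Fin d × Fin d) ℂ) :
    Matrix ((Fin d × Fin d) × (Fin d × Fin d)) ((Fin d × Fin d) × (Fin d × Fin d)) ℂ :=
  Matrix.of fun p q => A p.1 q.1 * B p.2 q.2

/-- Partial trace over factors 2 and 3 of `(ℂ^d)^{⊗4}`. -/
noncomputable def ptr23 {d : ℕ}
    (M : Matrix ((Fin d × Fin d) × (Fin d × Fin d)) ((Fin d × Fin d) × (Fin d × Fin d)) ℂ) :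
    Matrix (Fin d × Fin d) (Fin d × Fin d) ℂ :=
  Matrix.of fun a b => ∑ u : Fin d, ∑ v : Fin d, M ((a.1, u), (v, a.2)) ((b.1, u), (v, b.2))

/-- (A^R B^R)^R = tr₂₃[(1 ⊗ (23)^{T₃} ⊗ 1)(A ⊗ B)]. -/
theorem reshuffled_product (d : ℕ) (A B : Matrix (Fin d × Fin d) (Fin d × Fin d) ℂ) :
    reshuffle (reshuffle A * reshuffle B) = ptr23 (midPtSwap d * kronBip A B) := by
  ext a b
  simp only [reshuffle, ptr23, midPtSwap, kronBip, Matrix.mul_apply, Matrix.of_apply,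
    Fintype.sum_prod_type, ite_mul, zero_mul, one_mul, ite_and]
  simp only [Finset.sum_ite_irrel, Finset.sum_const_zero, Finset.sum_ite_eq,
    Finset.mem_univ, if_true]
  exact Finset.sum_comm
end

section
/- Let Φ be an operator on ℂ^{d_1} ⊗ ℂ^{d_2} and define Λ(ρ) = tr_1[Φ(ρ^T ⊗ 1)]. Then Λ is a positive map (Λ(X) ≥ 0 for all positive semidefinite X) if and only if Φ is block-positive, i.e. ⟨φ|⟨ψ| Φ |φ⟩|ψ⟩ ≥ 0 for all vectors φ ∈ ℂ^{d_1}, ψ ∈ ℂ^{d_2}. -/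
open Matrix ComplexOrder

/-!
Fix ψ and let `Φ_ψ = ⟨ψ|Φ|ψ⟩`, the compression of `Φ` by `ψ` on the second factor, an operator
on `ℂ^{d₁}`. Then `⟨ψ, Λ(X) ψ⟩ = tr(Φ_ψ Xᵀ)` and `⟨φ ⊗ ψ, Φ (φ ⊗ ψ)⟩ = ⟨φ, Φ_ψ φ⟩`. Since
transposition preserves positivity, `Λ` is positive iff `tr(Φ_ψ Y) ≥ 0` for all `Y ≥ 0` and all `ψ`;
by self-duality of the positive cone (rank-one `Y = φφ*` in one direction, a decomposition of `Y`
into rank-one terms in the other) this says `⟨φ, Φ_ψ φ⟩ ≥ 0` for all `φ`, i.e. block positivity.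
Over `ℂ` a nonnegative quadratic form is automatically Hermitian, so `Λ(X) ≥ 0` needs no separate
Hermiticity check.
-/

/-- Tensor product `X ⊗ Y` of matrices of possibly different sizes. -/
noncomputable def kron {d₁ d₂ : ℕ} (X : Matrix (Fin d₁) (Fin d₁) ℂ)
    (Y : Matrix (Fin d₂) (Fin d₂) ℂ) :
    Matrix (Fin d₁ × Fin d₂) (Fin d₁ × Fin d₂) ℂ :=
  Matrix.of fun p q => X p.1 q.1 * Y p.2 q.2

/-- The map Λ(ρ) = tr₁[Φ(ρᵀ ⊗ 1)]. -/
noncomputable def choiMap {d₁ d₂ : ℕ}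
    (Φ : Matrix (Fin d₁ × Fin d₂) (Fin d₁ × Fin d₂) ℂ)
    (ρ : Matrix (Fin d₁) (Fin d₁) ℂ) : Matrix (Fin d₂) (Fin d₂) ℂ :=
  Matrix.of fun a b => ∑ x : Fin d₁, (Φ * kron ρᵀ (1 : Matrix (Fin d₂) (Fin d₂) ℂ)) (x, a) (x, b)

namespace Matrix

variable {m n R : Type*} [Fintype m] [Fintype n]

theorem posSemidef_iff_forall_dotProduct_mulVec_nonneg {M : Matrix n n ℂ} :
    M.PosSemidef ↔ ∀ x, 0 ≤ star x ⬝ᵥ M *ᵥ x := by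
  classical
  refine ⟨PosSemidef.dotProduct_mulVec_nonneg, fun h => ?_⟩
  rw [← isPositive_toEuclideanLin_iff, LinearMap.isPositive_iff_complex]
  intro x
  have hz : star x.ofLp ⬝ᵥ M *ᵥ x.ofLp = _ := Complex.eq_re_of_ofReal_le (h x.ofLp)
  have hinner : x.ofLp ⬝ᵥ star (M *ᵥ x.ofLp) = star x.ofLp ⬝ᵥ M *ᵥ x.ofLp := by
    rw [dotProduct_star, dotProduct_comm, hz, Complex.star_def, Complex.conj_ofReal]
  simp_rw [EuclideanSpace.inner_eq_star_dotProduct, ofLp_toLpLin, toLin'_apply, hinner,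
    RCLike.re_to_complex]
  exact ⟨hz.symm, (Complex.nonneg_iff.mp (h x.ofLp)).1⟩

theorem trace_mul_vecMulVec [CommSemiring R] (C : Matrix n n R) (v w : n → R) :
    (C * vecMulVec v w).trace = w ⬝ᵥ C *ᵥ v := by
  rw [mul_vecMulVec, trace_vecMulVec, dotProduct_comm]

theorem forall_posSemidef_trace_mul_nonneg_iff {𝕜 : Type*} [RCLike 𝕜] {C : Matrix n n 𝕜} :
    (∀ X : Matrix n n 𝕜, X.PosSemidef → 0 ≤ (C * X).trace) ↔ ∀ v, 0 ≤ star v ⬝ᵥ C *ᵥ v := by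
  refine ⟨fun h v => trace_mul_vecMulVec C v (star v) ▸ h _ (posSemidef_vecMulVec_self_star v),
    fun h X hX => ?_⟩
  obtain ⟨k, v, rfl⟩ := posSemidef_iff_eq_sum_vecMulVec.mp hX
  rw [Finset.mul_sum, trace_sum]
  exact Finset.sum_nonneg fun i _ => trace_mul_vecMulVec C (v i) _ ▸ h (v i)

variable [CommSemiring R] [StarRing R]

/-- The compression `Φ_ψ = (1 ⊗ ψ)ᴴ Φ (1 ⊗ ψ)`. -/
def partialInner (Φ : Matrix (m × n) (m × n) R) (ψ : n → R) : Matrix m m R :=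
  of fun x y => ∑ a, ∑ b, star (ψ a) * Φ (x, a) (y, b) * ψ b

theorem star_dotProduct_mulVec_prod_eq_partialInner (Φ : Matrix (m × n) (m × n) R)
    (φ : m → R) (ψ : n → R) :
    star (fun p : m × n => φ p.1 * ψ p.2) ⬝ᵥ Φ *ᵥ (fun p : m × n => φ p.1 * ψ p.2) =
      star φ ⬝ᵥ partialInner Φ ψ *ᵥ φ := by
  simp only [dotProduct, mulVec, partialInner, of_apply, Fintype.sum_prod_type, Pi.star_apply,
    star_mul', Finset.mul_sum, Finset.sum_mul]
  refine Finset.sum_congr rfl fun x _ => ?_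
  rw [Finset.sum_comm]
  exact Finset.sum_congr rfl fun y _ =>
    Finset.sum_congr rfl fun a _ => Finset.sum_congr rfl fun b _ => by ring

end Matrix

theorem choiMap_apply {d₁ d₂ : ℕ} (Φ : Matrix (Fin d₁ × Fin d₂) (Fin d₁ × Fin d₂) ℂ)
    (X : Matrix (Fin d₁) (Fin d₁) ℂ) (a b : Fin d₂) :
    choiMap Φ X a b = ∑ x, ∑ y, Φ (x, a) (y, b) * X x y := by
  simp [choiMap, kron, mul_apply, Fintype.sum_prod_type, one_apply]

theorem star_dotProduct_choiMap_mulVec {d₁ d₂ : ℕ}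
    (Φ : Matrix (Fin d₁ × Fin d₂) (Fin d₁ × Fin d₂) ℂ) (X : Matrix (Fin d₁) (Fin d₁) ℂ)
    (ψ : Fin d₂ → ℂ) :
    star ψ ⬝ᵥ choiMap Φ X *ᵥ ψ = (partialInner Φ ψ * Xᵀ).trace := by
  simp only [dotProduct, mulVec, choiMap_apply, trace, diag, mul_apply, transpose_apply,
    partialInner, of_apply, Pi.star_apply, Finset.mul_sum, Finset.sum_mul]
  -- bubbles every sum over `Fin d₂` inside the sums over `Fin d₁`
  simp_rw [Finset.sum_comm (s := (Finset.univ : Finset (Fin d₂)))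
    (t := (Finset.univ : Finset (Fin d₁)))]
  exact Finset.sum_congr rfl fun x _ => Finset.sum_congr rfl fun y _ =>
    Finset.sum_congr rfl fun a _ => Finset.sum_congr rfl fun b _ => by ring

/-- Λ is a positive map iff Φ is block-positive. -/
theorem positive_map_iff_block_positive (d₁ d₂ : ℕ)
    (Φ : Matrix (Fin d₁ × Fin d₂) (Fin d₁ × Fin d₂) ℂ) :
    (∀ X : Matrix (Fin d₁) (Fin d₁) ℂ, X.PosSemidef → (choiMap Φ X).PosSemidef) ↔
      ∀ (φ : Fin d₁ → ℂ) (ψ : Fin d₂ → ℂ),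
        0 ≤ star (fun p : Fin d₁ × Fin d₂ => φ p.1 * ψ p.2) ⬝ᵥ
            Φ.mulVec (fun p : Fin d₁ × Fin d₂ => φ p.1 * ψ p.2) := by
  calc (∀ X : Matrix (Fin d₁) (Fin d₁) ℂ, X.PosSemidef → (choiMap Φ X).PosSemidef)
      ↔ ∀ X : Matrix (Fin d₁) (Fin d₁) ℂ, X.PosSemidef →
          ∀ ψ, 0 ≤ (partialInner Φ ψ * Xᵀ).trace := by
        simp_rw [posSemidef_iff_forall_dotProduct_mulVec_nonneg (M := choiMap Φ _),
          star_dotProduct_choiMap_mulVec]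
    _ ↔ ∀ ψ, ∀ X : Matrix (Fin d₁) (Fin d₁) ℂ, X.PosSemidef →
          0 ≤ (partialInner Φ ψ * X).trace :=
        ⟨fun h ψ X hX => by simpa using h Xᵀ hX.transpose ψ,
          fun h X hX ψ => h ψ Xᵀ hX.transpose⟩
    _ ↔ ∀ ψ φ, 0 ≤ star φ ⬝ᵥ partialInner Φ ψ *ᵥ φ := by
        simp_rw [forall_posSemidef_trace_mul_nonneg_iff]
    _ ↔ _ := by
        simp_rw [star_dotProduct_mulVec_prod_eq_partialInner]
        exact forall_comm
end

section
/- For d×d complex matrices X_1,…,X_k and j ∈ {1,…,k}, if j ≠ k then tr_{1…(k-1)}[(k…1)^{T_j} (X_1 ⊗ ⋯ ⊗ X_k)] = X_1 ⋯ X_j^T ⋯ X_{k-1} X_k, and if j = k then it equals (X_1 ⋯ X_{k-1})^T X_k, where (k…1) = (1…k)^{-1} is a cyclic permutation operator on (ℂ^d)^{⊗k} and T_j is the partial transpose on factor j. -/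
/-!
Contracting the indices of `X₁ ⊗ ⋯ ⊗ X_k` along the cycle `P = (k…1)` and tracing out all
factors but the last is exactly the index sum of the matrix product `X₁ ⋯ X_k`. A partial
transpose on a traced-out factor can be moved from `P` onto the tensor product, where it
transposes `X_j`; this settles `j ≠ k`. For `j = k`, transposing factor `k` of `P` is the same as
transposing all other factors of `Pᵀ = (1…k)`, and these can again be moved onto the tensor
product; the reversed cycle contracts `Y₁, …, Y_k` to `(Y₁ᵀ ⋯ Y_{k-1}ᵀ)ᵀ Y_k`.
-/

open Matrix

/-- The permutation operator of the cycle `(k…1) = (1…k)⁻¹` on `(ℂ^d)^{⊗k}`,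
with `k = n + 1`. -/
noncomputable def cycleDownOp (d n : ℕ) :
    Matrix (Fin (n + 1) → Fin d) (Fin (n + 1) → Fin d) ℂ :=
  Matrix.of fun i j => if ∀ t, i t = j (t + 1) then 1 else 0

/-- Partial transpose on the tensor factor `p`. -/
noncomputable def ptAt {d n : ℕ} (p : Fin n)
    (M : Matrix (Fin n → Fin d) (Fin n → Fin d) ℂ) :
    Matrix (Fin n → Fin d) (Fin n → Fin d) ℂ :=
  Matrix.of fun i j => M (Function.update i p (j p)) (Function.update j p (i p))

/-- Tensor product `X₁ ⊗ ⋯ ⊗ X_k` on `(ℂ^d)^{⊗k}`. -/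
noncomputable def kronFam {d n : ℕ} (X : Fin n → Matrix (Fin d) (Fin d) ℂ) :
    Matrix (Fin n → Fin d) (Fin n → Fin d) ℂ :=
  Matrix.of fun i j => ∏ t, X t (i t) (j t)

/-- Partial trace over all tensor factors except the last. -/
noncomputable def ptrExceptLast {d n : ℕ}
    (M : Matrix (Fin (n + 1) → Fin d) (Fin (n + 1) → Fin d) ℂ) :
    Matrix (Fin d) (Fin d) ℂ :=
  Matrix.of fun a b => ∑ v : Fin n → Fin d, M (Fin.snoc v a) (Fin.snoc v b)

theorem Fin.snoc_sub_one {α : Type*} {n : ℕ} (v : Fin n → α) (a : α) (t : Fin (n + 1)) :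
    (Fin.snoc v a : Fin (n + 1) → α) (t - 1) = (Fin.cons a v : Fin (n + 1) → α) t := by
  induction t using Fin.cases with
  | zero => rw [sub_eq_iff_eq_add.mpr (Fin.last_add_one n).symm, Fin.snoc_last, Fin.cons_zero]
  | succ s => rw [sub_eq_iff_eq_add.mpr Fin.coeSucc_eq_succ.symm, Fin.snoc_castSucc, Fin.cons_succ]

namespace Matrix

variable {ι R : Type*} [Fintype ι] [DecidableEq ι] [CommSemiring R]

theorem list_prod_ofFn_apply {m : ℕ} (Z : Fin (m + 1) → Matrix ι ι R) (x y : ι) :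
    (List.ofFn Z).prod x y =
      ∑ v : Fin m → ι, ∏ t, Z t ((Fin.cons x v : Fin (m + 1) → ι) t)
        ((Fin.snoc v y : Fin (m + 1) → ι) t) := by
  induction m generalizing x with
  | zero => simp [Fin.snoc]
  | succ m ih =>
    rw [← (Fin.consEquiv fun _ => ι).sum_comp, Fintype.sum_prod_type, List.ofFn_succ,
      List.prod_cons, mul_apply]
    refine Finset.sum_congr rfl fun c _ => ?_
    rw [ih, Finset.mul_sum]
    refine Finset.sum_congr rfl fun v _ => ?_
    simp [Fin.consEquiv, Fin.prod_univ_succ, ← Fin.cons_snoc_eq_snoc_cons]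

end Matrix

section PartialTranspose

variable {ι κ R : Type*} [DecidableEq ι]

/-- The partial transpose `M^{T_S}` on the tensor factors in `S`. -/
def ptOn (S : Finset ι) (M : Matrix (ι → κ) (ι → κ) R) : Matrix (ι → κ) (ι → κ) R :=
  Matrix.of fun i l => M (S.piecewise l i) (S.piecewise i l)

theorem ptAt_eq_ptOn_singleton {d n : ℕ} (p : Fin n)
    (M : Matrix (Fin n → Fin d) (Fin n → Fin d) ℂ) : ptAt p M = ptOn {p} M := by
  ext i l
  simp [ptAt, ptOn, Finset.piecewise_singleton]

theorem ptAt_eq_ptOn_compl_transpose {d n : ℕ} (p : Fin n)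
    (M : Matrix (Fin n → Fin d) (Fin n → Fin d) ℂ) : ptAt p M = ptOn {p}ᶜ Mᵀ := by
  ext i l
  simp [ptAt, ptOn, Finset.piecewise_compl, Finset.piecewise_singleton]

theorem ptOn_kronFam {d n : ℕ} (S : Finset (Fin n)) (X : Fin n → Matrix (Fin d) (Fin d) ℂ) :
    ptOn S (kronFam X) = kronFam fun t => if t ∈ S then (X t)ᵀ else X t := by
  ext i l
  simp only [ptOn, kronFam, Matrix.of_apply]
  refine Finset.prod_congr rfl fun t _ => ?_
  by_cases ht : t ∈ S <;> simp [ht]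

end PartialTranspose

theorem ptrExceptLast_apply {d n : ℕ}
    (M : Matrix (Fin (n + 1) → Fin d) (Fin (n + 1) → Fin d) ℂ) (a b : Fin d) :
    ptrExceptLast M a b =
      ∑ i, if i (Fin.last n) = a then M i (Function.update i (Fin.last n) b) else 0 := by
  have snocEquiv_eq (x : Fin d × (Fin n → Fin d)) :
      Fin.snocEquiv (fun _ => Fin d) x = Fin.snoc x.2 x.1 := rfl
  rw [← (Fin.snocEquiv fun _ => Fin d).sum_comp, Fintype.sum_prod_type]
  simp [ptrExceptLast, snocEquiv_eq, Fin.update_snoc_last]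

theorem ptrExceptLast_ptOn_mul {d n : ℕ} {S : Finset (Fin (n + 1))} (hS : Fin.last n ∉ S)
    (A B : Matrix (Fin (n + 1) → Fin d) (Fin (n + 1) → Fin d) ℂ) :
    ptrExceptLast (ptOn S A * B) = ptrExceptLast (A * ptOn S B) := by
  ext a b
  -- Exchanging the `S`-coordinates of the row and column index is an involution that keeps the
  -- last row coordinate.
  let swap (p : (Fin (n + 1) → Fin d) × (Fin (n + 1) → Fin d)) :=
    (S.piecewise p.2 p.1, S.piecewise p.1 p.2)
  have swap_swap p : swap (swap p) = p := by
    ext t <;> by_cases ht : t ∈ S <;> simp [swap, ht]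
  have swap_last p : (swap p).1 (Fin.last n) = p.1 (Fin.last n) := by simp [swap, hS]
  simp only [ptrExceptLast_apply, ← Finset.sum_filter, mul_apply, ptOn, of_apply]
  rw [← Finset.sum_product', ← Finset.sum_product']
  refine Finset.sum_nbij' swap swap (by simp [swap_last]) (by simp [swap_last])
    (fun p _ => swap_swap p) (fun p _ => swap_swap p) fun p _ => ?_
  congr 2 <;> ext t <;> by_cases ht : t = Fin.last n <;> simp [swap, ht, hS, Finset.piecewise] <;>
    split_ifs <;> rfl

theorem cycleDownOp_mul_apply {d n : ℕ}
    (N : Matrix (Fin (n + 1) → Fin d) (Fin (n + 1) → Fin d) ℂ) (i l : Fin (n + 1) → Fin d) :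
    (cycleDownOp d n * N) i l = N (fun t => i (t - 1)) l := by
  have hcycle (k : Fin (n + 1) → Fin d) : (∀ t, i t = k (t + 1)) ↔ k = fun t => i (t - 1) := by
    refine ⟨fun h => funext fun t => ?_, fun h t => ?_⟩
    · rw [h, sub_add_cancel]
    · simp only [h, add_sub_cancel_right]
  simp [cycleDownOp, mul_apply, hcycle]

theorem cycleDownOp_transpose_mul_apply {d n : ℕ}
    (N : Matrix (Fin (n + 1) → Fin d) (Fin (n + 1) → Fin d) ℂ) (i l : Fin (n + 1) → Fin d) :
    ((cycleDownOp d n)ᵀ * N) i l = N (fun t => i (t + 1)) l := by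
  have hcycle (k : Fin (n + 1) → Fin d) : (∀ t, k t = i (t + 1)) ↔ k = fun t => i (t + 1) :=
    funext_iff.symm
  simp [cycleDownOp, mul_apply, hcycle]

theorem ptrExceptLast_cycleDownOp_mul_kronFam {d n : ℕ}
    (X : Fin (n + 1) → Matrix (Fin d) (Fin d) ℂ) :
    ptrExceptLast (cycleDownOp d n * kronFam X) = (List.ofFn X).prod := by
  ext a b
  rw [list_prod_ofFn_apply]
  simp [ptrExceptLast, cycleDownOp_mul_apply, kronFam, Fin.snoc_sub_one]

theorem ptrExceptLast_cycleDownOp_transpose_mul_kronFam {d n : ℕ}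
    (Y : Fin (n + 1) → Matrix (Fin d) (Fin d) ℂ) :
    ptrExceptLast ((cycleDownOp d n)ᵀ * kronFam Y) =
      (List.ofFn fun s => (Y s.castSucc)ᵀ).prodᵀ * Y (Fin.last n) := by
  ext a b
  -- Transposing shows the right side as a single product of `n + 1` matrices.
  have hcons : ((List.ofFn fun s => (Y s.castSucc)ᵀ).prodᵀ * Y (Fin.last n)) a b =
      (List.ofFn (Fin.cons (Y (Fin.last n))ᵀ fun s => (Y s.castSucc)ᵀ)).prod b a := by
    rw [← transpose_apply ((List.ofFn _).prodᵀ * _), transpose_mul, transpose_transpose,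
      List.ofFn_succ, List.prod_cons]
    simp only [Fin.cons_zero, Fin.cons_succ]
  rw [hcons, list_prod_ofFn_apply]
  simp only [ptrExceptLast, cycleDownOp_transpose_mul_apply, kronFam, of_apply]
  refine Finset.sum_congr rfl fun v _ => ?_
  rw [Fin.prod_univ_castSucc, Fin.prod_univ_succ, mul_comm]
  simp [Fin.coeSucc_eq_succ, Fin.last_add_one]

/-- tr_{1…(k-1)}[(k…1)^{T_j} (X₁ ⊗ ⋯ ⊗ X_k)] equals
`X₁ ⋯ X_jᵀ ⋯ X_k` if `j ≠ k`, and `(X₁ ⋯ X_{k-1})ᵀ X_k` if `j = k`. -/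
theorem ptrace_pt_cycle_down (d n : ℕ) (X : Fin (n + 1) → Matrix (Fin d) (Fin d) ℂ)
    (j : Fin (n + 1)) :
    (j ≠ Fin.last n →
      ptrExceptLast (ptAt j (cycleDownOp d n) * kronFam X) =
        (List.ofFn fun t : Fin (n + 1) => if t = j then (X t)ᵀ else X t).prod) ∧
    (j = Fin.last n →
      ptrExceptLast (ptAt j (cycleDownOp d n) * kronFam X) =
        (List.ofFn fun t : Fin n => X t.castSucc).prodᵀ * X (Fin.last n)) := by
  refine ⟨fun hj => ?_, fun hj => ?_⟩
  · rw [ptAt_eq_ptOn_singleton, ptrExceptLast_ptOn_mul (by simpa [eq_comm] using hj), ptOn_kronFam,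
      ptrExceptLast_cycleDownOp_mul_kronFam]
    simp only [Finset.mem_singleton]
  · subst hj
    rw [ptAt_eq_ptOn_compl_transpose, ptrExceptLast_ptOn_mul (by simp), ptOn_kronFam,
      ptrExceptLast_cycleDownOp_transpose_mul_kronFam]
    simp [Fin.castSucc_ne_last]
end

section
/- For any d×d matrix A, tr_1[(1234)^{T_4} (A ⊗ 1 ⊗ 1 ⊗ 1)] = [(A ⊗ 1 ⊗ 1)^{R_{3,2}}]^{R_{3,1}}, where (1234) is the 4-cycle permutation operator on (ℂ^d)^{⊗4}, T_4 is the partial transpose on factor 4, and R_{k,l} is the generalized reshuffling exchanging the k-th ket with the l-th bra. -/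
open Matrix

/-- The permutation operator of the cycle (1234) on `(ℂ^d)^{⊗4}`. -/
noncomputable def cycle1234 (d : ℕ) :
    Matrix (Fin 4 → Fin d) (Fin 4 → Fin d) ℂ :=
  Matrix.of fun i j => if ∀ t, i t = j (t - 1) then 1 else 0

/-- Partial trace over the first tensor factor. -/
noncomputable def ptrFirst {d n : ℕ}
    (M : Matrix (Fin (n + 1) → Fin d) (Fin (n + 1) → Fin d) ℂ) :
    Matrix (Fin n → Fin d) (Fin n → Fin d) ℂ :=
  Matrix.of fun a b => ∑ x : Fin d, M (Fin.cons x a) (Fin.cons x b)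

/-- Generalized reshuffling `R_{k,l}`: the `k`-th ket and the `l`-th bra are
exchanged (indices are 0-based here). -/
noncomputable def reshKL {d n : ℕ} (k l : Fin n)
    (M : Matrix (Fin n → Fin d) (Fin n → Fin d) ℂ) :
    Matrix (Fin n → Fin d) (Fin n → Fin d) ℂ :=
  Matrix.of fun i j => M (Function.update i k (j l)) (Function.update j l (i k))

lemma sum_split {d n : ℕ} (g : (Fin (n+1) → Fin d) → ℂ) :
    ∑ k : Fin (n+1) → Fin d, g k = ∑ x : Fin d, ∑ a : Fin n → Fin d, g (Fin.cons x a) := by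
  rw [← (Fin.consEquiv (fun _ => Fin d)).sum_comp, Fintype.sum_prod_type]
  rfl

lemma sum_fin0 {d : ℕ} (g : (Fin 0 → Fin d) → ℂ) : ∑ k : Fin 0 → Fin d, g k = g ![] := by
  simp [Finset.sum_eq_single ![]]
  congr

lemma sum4 {d : ℕ} (g : (Fin 4 → Fin d) → ℂ) :
    ∑ k : Fin 4 → Fin d, g k = ∑ p : Fin d, ∑ q : Fin d, ∑ r : Fin d, ∑ s : Fin d, g ![p,q,r,s] := by
  rw [sum_split]
  refine Finset.sum_congr rfl fun p _ => ?_
  rw [sum_split]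
  refine Finset.sum_congr rfl fun q _ => ?_
  rw [sum_split]
  refine Finset.sum_congr rfl fun r _ => ?_
  rw [sum_split]
  refine Finset.sum_congr rfl fun s _ => ?_
  rw [sum_fin0]
  rfl


/-- tr₁[(1234)^{T₄}(A ⊗ 1 ⊗ 1 ⊗ 1)] = [(A ⊗ 1 ⊗ 1)^{R_{3,2}}]^{R_{3,1}}. -/
theorem ptrace_pt_cycle_reshuffle (d : ℕ) (A : Matrix (Fin d) (Fin d) ℂ) :
    ptrFirst (ptAt (3 : Fin 4) (cycle1234 d) * kronFam ![A, 1, 1, 1]) =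
      reshKL (2 : Fin 3) (0 : Fin 3) (reshKL (2 : Fin 3) (1 : Fin 3) (kronFam ![A, 1, 1])) := by
  ext a b
  simp only [ptrFirst, ptAt, cycle1234, kronFam, reshKL, Matrix.mul_apply, Matrix.of_apply]
  simp only [sum4]
  simp [Fin.forall_fin_succ, Function.update, Fin.prod_univ_succ, Matrix.one_apply,
    Finset.mul_sum, Finset.sum_ite_eq, Finset.sum_ite_eq', mul_ite, ite_mul]
  have h1 : (-1 : Fin 4) = 3 := by decide
  have h2 : (Fin.succ 2 : Fin 4) = 3 := by decide
  have h3 : (Fin.succ 2 - 1 : Fin 4) = 2 := by decide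
  simp only [h1, h2, h3, if_pos rfl]
  have h4 : ∀ x : Fin d, (Fin.cons x a : Fin 4 → Fin d) 3 = a 2 := fun x => rfl
  simp only [h4, if_neg (show ¬(2 : Fin 4) = 3 by decide)]
  simp only [if_true, if_neg (show ¬(3 - 1 : Fin 4) = 3 by decide)]
  simp only [ite_and, Finset.sum_ite_eq, Finset.sum_ite_eq', Finset.mem_univ, if_true]
  by_cases hb : b 2 = b 1 <;> by_cases ha : a 1 = b 0 <;>
    simp [hb, ha, Finset.sum_ite_eq, Finset.sum_ite_eq', eq_comm]
end

section
/- For d×d matrices X_1, X_2, X_3, tr_{123}[(12345)^{T_2} (X_1 ⊗ X_2 ⊗ X_3 ⊗ 1 ⊗ 1)] = ((X_3 X_2^T X_1 ⊗ 1)^R)^{T_2}, where (12345) is the 5-cycle permutation operator on (ℂ^d)^{⊗5}, R is reshuffling, and the outer T_2 is the partial transpose on the second of the two remaining factors. -/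
open Matrix

/-- The permutation operator of the cycle (12345) on `(ℂ^d)^{⊗5}`. -/
noncomputable def cycle12345 (d : ℕ) :
    Matrix (Fin 5 → Fin d) (Fin 5 → Fin d) ℂ :=
  Matrix.of fun i j => if ∀ t, i t = j (t - 1) then 1 else 0

/-- Partial trace over the first three of five tensor factors, producing an
operator on `ℂ^d ⊗ ℂ^d`. -/
noncomputable def ptr123 {d : ℕ}
    (M : Matrix (Fin 5 → Fin d) (Fin 5 → Fin d) ℂ) :
    Matrix (Fin d × Fin d) (Fin d × Fin d) ℂ :=
  Matrix.of fun a b => ∑ x : Fin d, ∑ y : Fin d, ∑ z : Fin d,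
    M ![x, y, z, a.1, a.2] ![x, y, z, b.1, b.2]

/-- Kronecker (tensor) product of two `d × d` matrices. -/
noncomputable def kron2 {d : ℕ} (A B : Matrix (Fin d) (Fin d) ℂ) :
    Matrix (Fin d × Fin d) (Fin d × Fin d) ℂ :=
  Matrix.of fun p q => A p.1 q.1 * B p.2 q.2

/-- Partial transpose on the second factor of `M_d ⊗ M_d`. -/
noncomputable def pt2 {d : ℕ} (M : Matrix (Fin d × Fin d) (Fin d × Fin d) ℂ) :
    Matrix (Fin d × Fin d) (Fin d × Fin d) ℂ :=
  Matrix.of fun p q => M (p.1, q.2) (q.1, p.2)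

theorem sum_pi5 {α : Type*} [AddCommMonoid α] (d : ℕ) (f : (Fin 5 → Fin d) → α) :
    ∑ k : Fin 5 → Fin d, f k =
      ∑ k0, ∑ k1, ∑ k2, ∑ k3, ∑ k4, f ![k0, k1, k2, k3, k4] := by
  rw [← (Fin.consEquiv (fun _ : Fin 5 => Fin d)).sum_comp, Fintype.sum_prod_type]
  refine Finset.sum_congr rfl fun k0 _ => ?_
  rw [← (Fin.consEquiv (fun _ : Fin 4 => Fin d)).sum_comp, Fintype.sum_prod_type]
  refine Finset.sum_congr rfl fun k1 _ => ?_
  rw [← (Fin.consEquiv (fun _ : Fin 3 => Fin d)).sum_comp, Fintype.sum_prod_type]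
  refine Finset.sum_congr rfl fun k2 _ => ?_
  rw [← (Fin.consEquiv (fun _ : Fin 2 => Fin d)).sum_comp, Fintype.sum_prod_type]
  refine Finset.sum_congr rfl fun k3 _ => ?_
  rw [← (Fin.consEquiv (fun _ : Fin 1 => Fin d)).sum_comp, Fintype.sum_prod_type]
  refine Finset.sum_congr rfl fun k4 _ => ?_
  rw [Fintype.sum_unique]
  congr 1

theorem entry_calc (d : ℕ) (X₁ X₂ X₃ : Matrix (Fin d) (Fin d) ℂ) (x y z a1 a2 b1 b2 : Fin d) :
    (ptAt (1 : Fin 5) (cycle12345 d) * kronFam ![X₁, X₂, X₃, 1, 1])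
      ![x, y, z, a1, a2] ![x, y, z, b1, b2] =
    (if z = y then (∑ s, X₁ s x * X₂ s y) * X₃ a1 z * (1 : Matrix (Fin d) (Fin d) ℂ) a2 b1 * (1 : Matrix (Fin d) (Fin d) ℂ) x b2 else 0) := by
  rw [Matrix.mul_apply, sum_pi5]
  simp only [ptAt, cycle12345, kronFam, Matrix.of_apply, Fin.forall_fin_succ,
    Fin.prod_univ_five]
  have h1 : (-1 : Fin 5) = 4 := by decide
  have h2 : (Fin.succ 2 : Fin 5) = 3 := by decide
  have h3 : ((Fin.succ 2).succ : Fin 5) = 4 := by decide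
  have h4 : ((3:Fin 5) - 1) = 2 := by decide
  have h5 : ((4:Fin 5) - 1) = 3 := by decide
  simp [Function.update, Fin.forall_fin_succ, h1, h2, h3, h4, h5]
  simp only [ite_and]
  simp [Matrix.one_apply, Finset.sum_ite_eq, Finset.sum_ite_eq', mul_ite, ite_mul, mul_zero,
    zero_mul, Finset.mul_sum, Finset.sum_mul]

/-- tr₁₂₃[(12345)^{T₂}(X₁ ⊗ X₂ ⊗ X₃ ⊗ 1 ⊗ 1)] = ((X₃X₂ᵀX₁ ⊗ 1)^R)^{T₂}. -/
theorem ptrace_pt_cycle_three_to_two (d : ℕ) (X₁ X₂ X₃ : Matrix (Fin d) (Fin d) ℂ) :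
    ptr123 (ptAt (1 : Fin 5) (cycle12345 d) * kronFam ![X₁, X₂, X₃, 1, 1]) =
      pt2 (reshuffle (kron2 (X₃ * X₂ᵀ * X₁) 1)) := by
  ext ⟨a1, a2⟩ ⟨b1, b2⟩
  simp only [ptr123, Matrix.of_apply, entry_calc]
  simp only [pt2, reshuffle, kron2, Matrix.of_apply, Matrix.mul_apply, Matrix.transpose_apply,
    Matrix.one_apply]
  by_cases h : a2 = b1
  · simp only [h, if_true, eq_comm, if_pos rfl]
    simp only [mul_one, mul_ite, mul_zero, Finset.sum_ite_eq, Finset.mem_univ, if_true,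
      Finset.sum_ite_irrel, Finset.sum_const_zero]
    simp only [Finset.sum_mul, Finset.mul_sum]
    rw [Finset.sum_comm]
    exact Finset.sum_congr rfl fun i _ => Finset.sum_congr rfl fun j _ => by ring
  · simp [h, Ne.symm h]
end

section
/- Let ρ be as in the Werner state parameterization and define g_1(A,B) = tr_{12}[ρ^{T_1}(A ⊗ B ⊗ 1)]. Then g_1(A,B) = α_1 tr(A)tr(B)·1 + α_2 tr(A^T B)·1 + α_3 tr(A)B + α_4 tr(B)A^T + α_5 B A^T + α_6 A^T B. -/
open Matrix

/-- Identity-style permutation operators on `(ℂ^d)^{⊗3}` (product-type indices). -/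
noncomputable def permOp12 (d : ℕ) :
    Matrix (Fin d × Fin d × Fin d) (Fin d × Fin d × Fin d) ℂ :=
  Matrix.of fun i j => if i.1 = j.2.1 ∧ i.2.1 = j.1 ∧ i.2.2 = j.2.2 then 1 else 0

noncomputable def permOp23 (d : ℕ) :
    Matrix (Fin d × Fin d × Fin d) (Fin d × Fin d × Fin d) ℂ :=
  Matrix.of fun i j => if i.1 = j.1 ∧ i.2.1 = j.2.2 ∧ i.2.2 = j.2.1 then 1 else 0

noncomputable def permOp13 (d : ℕ) :
    Matrix (Fin d × Fin d × Fin d) (Fin d × Fin d × Fin d) ℂ :=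
  Matrix.of fun i j => if i.1 = j.2.2 ∧ i.2.1 = j.2.1 ∧ i.2.2 = j.1 then 1 else 0

/-- The cycle (123), sending `|v₁v₂v₃⟩` to `|v₃v₁v₂⟩`. -/
noncomputable def permOp123 (d : ℕ) :
    Matrix (Fin d × Fin d × Fin d) (Fin d × Fin d × Fin d) ℂ :=
  Matrix.of fun i j => if i.1 = j.2.2 ∧ i.2.1 = j.1 ∧ i.2.2 = j.2.1 then 1 else 0

/-- The cycle (321), sending `|v₁v₂v₃⟩` to `|v₂v₃v₁⟩`. -/
noncomputable def permOp321 (d : ℕ) :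
    Matrix (Fin d × Fin d × Fin d) (Fin d × Fin d × Fin d) ℂ :=
  Matrix.of fun i j => if i.1 = j.2.1 ∧ i.2.1 = j.2.2 ∧ i.2.2 = j.1 then 1 else 0

/-- Tensor product of three `d × d` matrices. -/
noncomputable def kron3 {d : ℕ} (A B C : Matrix (Fin d) (Fin d) ℂ) :
    Matrix (Fin d × Fin d × Fin d) (Fin d × Fin d × Fin d) ℂ :=
  Matrix.of fun i j => A i.1 j.1 * B i.2.1 j.2.1 * C i.2.2 j.2.2

/-- Partial trace over the first two of three tensor factors. -/
noncomputable def ptr12 {d : ℕ}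
    (M : Matrix (Fin d × Fin d × Fin d) (Fin d × Fin d × Fin d) ℂ) :
    Matrix (Fin d) (Fin d) ℂ :=
  Matrix.of fun a b => ∑ x : Fin d, ∑ y : Fin d, M (x, y, a) (x, y, b)

/-- Partial transpose on the first of three tensor factors. -/
noncomputable def pt1of3 {d : ℕ}
    (M : Matrix (Fin d × Fin d × Fin d) (Fin d × Fin d × Fin d) ℂ) :
    Matrix (Fin d × Fin d × Fin d) (Fin d × Fin d × Fin d) ℂ :=
  Matrix.of fun i j => M (j.1, i.2.1, i.2.2) (i.1, j.2.1, j.2.2)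

/-! The map `ρ ↦ tr₁₂[ρ^{T₁}(A ⊗ B ⊗ 1)]` is `ℂ`-linear, so it suffices to evaluate it on the
six permutation operators. Entrywise it is the contraction `g₁_apply_apply`, and the Kronecker
deltas of a permutation operator collapse it to a single trace or product of `Aᵀ` and `B`. -/

section Linearity

variable {d : ℕ}

theorem pt1of3_add (M N : Matrix (Fin d × Fin d × Fin d) (Fin d × Fin d × Fin d) ℂ) :
    pt1of3 (M + N) = pt1of3 M + pt1of3 N := rfl

theorem pt1of3_smul (c : ℂ) (M : Matrix (Fin d × Fin d × Fin d) (Fin d × Fin d × Fin d) ℂ) :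
    pt1of3 (c • M) = c • pt1of3 M := rfl

theorem ptr12_add (M N : Matrix (Fin d × Fin d × Fin d) (Fin d × Fin d × Fin d) ℂ) :
    ptr12 (M + N) = ptr12 M + ptr12 N := by
  ext a b
  simp [ptr12, Finset.sum_add_distrib]

theorem ptr12_smul (c : ℂ) (M : Matrix (Fin d × Fin d × Fin d) (Fin d × Fin d × Fin d) ℂ) :
    ptr12 (c • M) = c • ptr12 M := by
  ext a b
  simp [ptr12, Finset.mul_sum]

end Linearity

namespace WernerG1

variable {d : ℕ} (A B : Matrix (Fin d) (Fin d) ℂ)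

noncomputable def g₁ :
    Matrix (Fin d × Fin d × Fin d) (Fin d × Fin d × Fin d) ℂ →ₗ[ℂ] Matrix (Fin d) (Fin d) ℂ where
  toFun ρ := ptr12 (pt1of3 ρ * kron3 A B 1)
  map_add' ρ σ := by rw [pt1of3_add, Matrix.add_mul, ptr12_add]
  map_smul' c ρ := by rw [pt1of3_smul, Matrix.smul_mul, ptr12_smul, RingHom.id_apply]

theorem g₁_apply_apply (ρ : Matrix (Fin d × Fin d × Fin d) (Fin d × Fin d × Fin d) ℂ)
    (a b : Fin d) :
    g₁ A B ρ a b = ∑ x, ∑ y, ∑ u, ∑ v, ρ (u, y, a) (x, v, b) * A u x * B v y := by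
  simp [g₁, ptr12, pt1of3, kron3, Matrix.mul_apply, Matrix.one_apply, Fintype.sum_prod_type,
    mul_assoc]

theorem g₁_one : g₁ A B 1 = (A.trace * B.trace) • (1 : Matrix (Fin d) (Fin d) ℂ) := by
  ext a b
  simp [g₁_apply_apply, Matrix.one_apply, Matrix.trace, ite_and, Finset.sum_mul_sum]

theorem g₁_permOp12 : g₁ A B (permOp12 d) = (Aᵀ * B).trace • (1 : Matrix (Fin d) (Fin d) ℂ) := by
  ext a b
  simp [g₁_apply_apply, permOp12, Matrix.one_apply, Matrix.trace, Matrix.mul_apply, ite_and]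

theorem g₁_permOp23 : g₁ A B (permOp23 d) = A.trace • B := by
  ext a b
  simp [g₁_apply_apply, permOp23, Matrix.trace, ite_and, Finset.sum_mul]

theorem g₁_permOp13 : g₁ A B (permOp13 d) = B.trace • Aᵀ := by
  ext a b
  simp [g₁_apply_apply, permOp13, Matrix.trace, ite_and, Finset.mul_sum, mul_comm]

theorem g₁_permOp123 : g₁ A B (permOp123 d) = B * Aᵀ := by
  ext a b
  simp [g₁_apply_apply, permOp123, Matrix.mul_apply, ite_and, mul_comm]

theorem g₁_permOp321 : g₁ A B (permOp321 d) = Aᵀ * B := by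
  ext a b
  simp [g₁_apply_apply, permOp321, Matrix.mul_apply, ite_and]

end WernerG1

/-- `g₁(A,B) = tr₁₂[ρ^{T₁}(A ⊗ B ⊗ 1)]` evaluated for a linear combination of
permutation operators `ρ`. -/
theorem eggeling_werner_g1 (d : ℕ) (α₁ α₂ α₃ α₄ α₅ α₆ : ℂ)
    (A B : Matrix (Fin d) (Fin d) ℂ) :
    ptr12 (pt1of3 (α₁ • (1 : Matrix (Fin d × Fin d × Fin d) (Fin d × Fin d × Fin d) ℂ) +
        α₂ • permOp12 d + α₃ • permOp23 d + α₄ • permOp13 d +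
        α₅ • permOp123 d + α₆ • permOp321 d) * kron3 A B 1) =
      (α₁ * A.trace * B.trace) • (1 : Matrix (Fin d) (Fin d) ℂ) +
        (α₂ * (Aᵀ * B).trace) • (1 : Matrix (Fin d) (Fin d) ℂ) +
        (α₃ * A.trace) • B + (α₄ * B.trace) • Aᵀ +
        α₅ • (B * Aᵀ) + α₆ • (Aᵀ * B) := by
  change WernerG1.g₁ A B _ = _
  simp only [map_add, map_smul, WernerG1.g₁_one, WernerG1.g₁_permOp12, WernerG1.g₁_permOp23,
    WernerG1.g₁_permOp13, WernerG1.g₁_permOp123, WernerG1.g₁_permOp321, smul_smul, mul_assoc]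
end
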